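/- arXiv:1809.01861 — 4 statements merged into one kernel-verified Lean document; each statement's English description precedes it below -/
import Mathlib

section
/- If a permutation x in S_m has disjoint cycle lengths e_1,...,e_r and y in S_n has disjoint cycle lengths f_1,...,f_s, then the permutation (x,y) acting on the product set of size mn has, for each pair (i,j), exactly gcd(e_i,f_j) cycles of length lcm(e_i,f_j), and these are all of its cycles. -/
/-!
A multiset `M` of positive integers is determined, by Möbius inversion, by the function
`d ↦ ∑_{e ∈ M, e ∣ d} e`. For the full cycle type of a permutation `σ` this function counts the
fixed points of `σ ^ d`. The fixed points of `(x, y) ^ d` are the pairs of fixed points of `x ^ d`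
and `y ^ d`, so their number is a product; the proposed multiset has the same product, because
`lcm e f ∣ d ↔ e ∣ d ∧ f ∣ d` and `gcd e f * lcm e f = e * f`.
-/

open Equiv

/-- The full cycle type of a permutation of a finite type: the multiset of lengths of its
disjoint cycles, *including* fixed points as cycles of length 1. -/
noncomputable def fullCycleType {α : Type*} [Fintype α] (σ : Equiv.Perm α) : Multiset ℕ := by
  classical exact σ.cycleType + Multiset.replicate (Fintype.card α - σ.support.card) 1

open Finset

theorem Nat.eq_of_sum_divisors_eq {R : Type*} [AddCommGroup R] {f g : ℕ → R}
    (h : ∀ n > 0, ∑ i ∈ n.divisors, f i = ∑ i ∈ n.divisors, g i) {n : ℕ} (hn : 0 < n) :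
    f n = g n := by
  have inversion (u : ℕ → R) (hu : ∀ m > 0, ∑ i ∈ m.divisors, u i = ∑ i ∈ m.divisors, f i) :
      u n = ∑ x ∈ n.divisorsAntidiagonal,
        ArithmeticFunction.moebius x.1 • ∑ i ∈ x.2.divisors, f i :=
    (ArithmeticFunction.sum_eq_iff_sum_smul_moebius_eq.1 hu n hn).symm
  rw [inversion f fun _ _ => rfl, inversion g fun m hm => (h m hm).symm]

theorem Nat.Partition.zero_notMem_parts {n : ℕ} (p : n.Partition) : 0 ∉ p.parts :=
  fun h => (p.parts_pos h).ne rfl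

namespace Multiset

theorem sum_filter_dvd_eq_sum_divisors (M : Multiset ℕ) {d : ℕ} (hd : d ≠ 0) :
    (M.filter (· ∣ d)).sum = ∑ b ∈ d.divisors, M.count b * b := by
  rw [Finset.sum_multiset_count_of_subset _ d.divisors]
  · refine Finset.sum_congr rfl fun b hb => ?_
    rw [count_filter_of_pos (p := (· ∣ d)) (Nat.dvd_of_mem_divisors hb), smul_eq_mul]
  · intro b hb
    simp only [mem_toFinset, mem_filter] at hb
    exact Nat.mem_divisors.2 ⟨hb.2, hd⟩

theorem eq_of_sum_filter_dvd_eq {M N : Multiset ℕ} (hM : 0 ∉ M) (hN : 0 ∉ N)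
    (h : ∀ d > 0, (M.filter (· ∣ d)).sum = (N.filter (· ∣ d)).sum) : M = N := by
  ext b
  rcases Nat.eq_zero_or_pos b with rfl | hb
  · rw [count_eq_zero.2 hM, count_eq_zero.2 hN]
  have weighted_count : ((M.count b * b : ℕ) : ℤ) = ((N.count b * b : ℕ) : ℤ) :=
    Nat.eq_of_sum_divisors_eq (f := fun b => ((M.count b * b : ℕ) : ℤ))
      (g := fun b => ((N.count b * b : ℕ) : ℤ)) (fun d hd => by
      simp only [← Nat.cast_sum, ← sum_filter_dvd_eq_sum_divisors _ hd.ne', h d hd]) hb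
  exact Nat.eq_of_mul_eq_mul_right hb (by exact_mod_cast weighted_count)

theorem zero_notMem_bind_replicate_gcd_lcm {Mx My : Multiset ℕ} (hMx : 0 ∉ Mx) (hMy : 0 ∉ My) :
    0 ∉ Mx.bind fun e => My.bind fun f => replicate (e.gcd f) (e.lcm f) := by
  simp only [mem_bind, mem_replicate]
  rintro ⟨e, he, f, hf, -, hlcm⟩
  rcases Nat.lcm_eq_zero_iff.1 hlcm.symm with rfl | rfl
  exacts [hMx he, hMy hf]

theorem filter_dvd_bind_replicate_gcd_lcm (Mx My : Multiset ℕ) (d : ℕ) :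
    (Mx.bind fun e => My.bind fun f => replicate (e.gcd f) (e.lcm f)).filter (· ∣ d) =
      (Mx.filter (· ∣ d)).bind fun e =>
        (My.filter (· ∣ d)).bind fun f => replicate (e.gcd f) (e.lcm f) := by
  have filter_replicate_lcm (e f : ℕ) : (replicate (e.gcd f) (e.lcm f)).filter (· ∣ d) =
      if e ∣ d then if f ∣ d then replicate (e.gcd f) (e.lcm f) else 0 else 0 := by
    by_cases h : e ∣ d ∧ f ∣ d
    · rw [if_pos h.1, if_pos h.2]
      exact filter_eq_self.2 fun a ha => eq_of_mem_replicate ha ▸ Nat.lcm_dvd h.1 h.2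
    · rw [← ite_and, if_neg h]
      exact filter_eq_nil.2 fun a ha => eq_of_mem_replicate ha ▸ mt Nat.lcm_dvd_iff.1 h
  simp only [filter_bind, filter_replicate_lcm, bind_filter]
  refine bind_congr fun e _ => ?_
  split_ifs <;> simp

theorem sum_bind_replicate_gcd_lcm (Mx My : Multiset ℕ) :
    (Mx.bind fun e => My.bind fun f => replicate (e.gcd f) (e.lcm f)).sum = Mx.sum * My.sum := by
  have sum_mul_left (e : ℕ) : (My.map (e * ·)).sum = e * My.sum := by
    simpa using sum_map_mul_left (s := My) (f := id) (a := e)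
  simp only [sum_bind, sum_replicate, smul_eq_mul, Nat.gcd_mul_lcm, sum_mul_left]
  simpa using sum_map_mul_right (s := Mx) (f := id) (a := My.sum)

end Multiset

namespace Equiv.Perm

theorem prodCongr_pow_apply {β γ : Type*} (x : Perm β) (y : Perm γ) (d : ℕ) (p : β × γ) :
    (prodCongr x y ^ d) p = ((x ^ d) p.1, (y ^ d) p.2) := by
  simp [coe_pow, Prod.map_iterate, Prod.map_apply']

theorem card_fixedPoints_prodCongr_pow {β γ : Type*} [Fintype β] [DecidableEq β] [Fintype γ]
    [DecidableEq γ] (x : Perm β) (y : Perm γ) (d : ℕ) :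
    #{p | (prodCongr x y ^ d) p = p} = #{a | (x ^ d) a = a} * #{b | (y ^ d) b = b} := by
  rw [← card_product, ← filter_product, univ_product_univ]
  simp [prodCongr_pow_apply, Prod.ext_iff]

variable {α : Type*} [Fintype α] [DecidableEq α]

theorem fullCycleType_eq_parts_partition (σ : Perm α) : fullCycleType σ = σ.partition.parts := by
  unfold fullCycleType
  rw [parts_partition]
  congr!

theorem card_support_pow (σ : Perm α) (d : ℕ) :
    #(σ ^ d).support = (σ.cycleType.filter (¬ · ∣ d)).sum := by
  induction σ using cycle_induction_on with
  | base_one => simp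
  | base_cycles c hc =>
    rw [hc.cycleType, Multiset.filter_singleton, ← hc.orderOf]
    split_ifs with h
    · simp [orderOf_dvd_iff_pow_eq_one.1 h]
    · simp [hc.support_pow_eq_iff.2 h, hc.orderOf]
  | induction_disjoint σ τ hd _ hσ hτ =>
    rw [hd.commute.mul_pow, (hd.pow_disjoint_pow d d).card_support_mul, hd.cycleType_mul,
      Multiset.filter_add, Multiset.sum_add, hσ, hτ]

theorem card_fixedPoints_pow (σ : Perm α) (d : ℕ) :
    #{p | (σ ^ d) p = p} = (σ.partition.parts.filter (· ∣ d)).sum := by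
  have fixed_eq : #{p | (σ ^ d) p = p} = Fintype.card α - #(σ ^ d).support := by
    rw [← card_compl]
    congr 1
    ext p
    simp
  have ones_dvd : ∀ a ∈ Multiset.replicate (Fintype.card α - #σ.support) 1, a ∣ d :=
    fun a ha => Multiset.eq_of_mem_replicate ha ▸ one_dvd d
  rw [parts_partition, Multiset.filter_add, Multiset.sum_add, Multiset.filter_eq_self.2 ones_dvd,
    Multiset.sum_replicate, smul_eq_mul, mul_one, fixed_eq, card_support_pow]
  have split_dvd := Multiset.sum_filter_add_sum_filter_not (s := σ.cycleType) (· ∣ d)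
  have sum_eq_card := σ.sum_cycleType
  have card_le := σ.support.card_le_univ
  omega

end Equiv.Perm

/-- If `x ∈ S_m` has disjoint cycle lengths `e_1, ..., e_r` and `y ∈ S_n` has disjoint cycle
lengths `f_1, ..., f_s` (fixed points counting as cycles of length 1), then the product
permutation `(x, y)` of the `m·n` points has, for each pair `(i, j)`, exactly `gcd (e_i, f_j)`
cycles of length `lcm (e_i, f_j)`, and these are all of its cycles. -/
theorem product_perm_cycleType (m n : ℕ) (x : Equiv.Perm (Fin m)) (y : Equiv.Perm (Fin n)) :
    fullCycleType (Equiv.prodCongr x y) =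
      (fullCycleType x).bind fun e =>
        (fullCycleType y).bind fun f =>
          Multiset.replicate (Nat.gcd e f) (Nat.lcm e f) := by
  simp only [Perm.fullCycleType_eq_parts_partition]
  refine Multiset.eq_of_sum_filter_dvd_eq (Nat.Partition.zero_notMem_parts _)
    (Multiset.zero_notMem_bind_replicate_gcd_lcm (Nat.Partition.zero_notMem_parts _)
      (Nat.Partition.zero_notMem_parts _)) fun d _ => ?_
  rw [Multiset.filter_dvd_bind_replicate_gcd_lcm, Multiset.sum_bind_replicate_gcd_lcm,
    ← Perm.card_fixedPoints_pow, ← Perm.card_fixedPoints_pow, ← Perm.card_fixedPoints_pow,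
    Perm.card_fixedPoints_prodCongr_pow]
end

section
/- For a permutation σ in S_n, define ind(σ) = n minus the number of disjoint cycles of σ (counting fixed points as cycles). Then for any x in S_m and y in S_n, the index of the product permutation (x,y) on mn points satisfies ind(x,y) ≥ n·ind(x), with equality when y is the identity; in particular, the minimal index of an element of S_m × S_n (in its product action on mn points) projecting to a given x in S_m is attained by (x,1) and equals n·ind(x). -/
/-!
Writing `ind σ = N - #(orbits of ⟨σ⟩)`, everything reduces to counting orbits on `α × β`.
The orbits of `(x, 1)` are exactly the sets `O × {b}` with `O` an orbit of `x`, so there are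
`#(orbits of x) · |β|` of them. For arbitrary `y`, every orbit of `(x, y)` meets `{a} × β`
for a fixed representative `a` of some orbit of `x`, so there are at most that many.
-/

/-- The index of a permutation of a finite set of size `N`: `N` minus the number of its
disjoint cycles (fixed points counting as cycles). This equals the sum over the nontrivial
cycles of (length - 1). -/
noncomputable def permIndex {α : Type*} [Fintype α] (σ : Equiv.Perm α) : ℕ := by
  classical exact σ.cycleType.sum - σ.cycleType.card

open Function

namespace Equiv.Perm

variable {α β : Type*}

section OrbitCount

variable [Fintype α] (σ : Perm α)

noncomputable def quotientSameCycleEquiv [DecidableEq α] :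
    Quotient (SameCycle.setoid σ) ≃ fixedPoints σ ⊕ σ.cycleFactorsFinset := by
  refine Equiv.ofBijective (Quotient.lift (fun a => if h : σ a = a then .inl ⟨a, h⟩ else
      .inr ⟨σ.cycleOf a, cycleOf_mem_cycleFactorsFinset_iff.2 (mem_support.2 h)⟩) ?_)
    ⟨?_, ?_⟩
  · intro a b (hab : σ.SameCycle a b)
    by_cases ha : σ a = a
    · obtain rfl := hab.eq_of_left ha
      rfl
    · have hb : σ b ≠ b := fun hb => ha (hab.apply_eq_self_iff.2 hb)
      simp only [ha, hb, dite_false, Sum.inr.injEq, Subtype.mk.injEq]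
      exact hab.cycleOf_eq
  · intro qa qb hab
    induction qa, qb using Quotient.inductionOn₂ with | _ a b => ?_
    apply Quotient.sound
    by_cases ha : σ a = a <;> by_cases hb : σ b = b <;>
      simp only [Quotient.lift_mk, ha, hb, dite_true, dite_false, reduceCtorEq, Sum.inl.injEq,
        Sum.inr.injEq, Subtype.mk.injEq] at hab
    · exact (congrArg Subtype.val hab).sameCycle σ
    · exact (mem_support_cycleOf_iff' ha).1
        (hab ▸ mem_support_cycleOf_iff.2 ⟨.rfl, mem_support.2 hb⟩)
  · rintro (⟨a, ha⟩ | ⟨c, hc⟩)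
    · exact ⟨⟦a⟧, dif_pos ha⟩
    · obtain ⟨a, ha⟩ := (mem_cycleFactorsFinset_iff.1 hc).1.nonempty_support
      have hσa : σ a ≠ a := mem_support.1 (mem_cycleFactorsFinset_support_le hc ha)
      exact ⟨⟦a⟧, by simp [hσa, (cycle_is_cycleOf ha hc).symm]⟩

theorem permIndex_add_card_quotient_sameCycle :
    permIndex σ + Nat.card (Quotient (SameCycle.setoid σ)) = Nat.card α := by
  classical
  rw [Nat.card_eq_fintype_card (α := α)]
  have hcard : Nat.card (Quotient (SameCycle.setoid σ)) =
      (Fintype.card α - σ.cycleType.sum) + Multiset.card σ.cycleType := by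
    rw [Nat.card_congr (quotientSameCycleEquiv σ), Nat.card_sum, Nat.card_eq_fintype_card,
      card_fixedPoints, Nat.card_eq_fintype_card, Fintype.card_coe, cycleType_def,
      Multiset.card_map, Finset.card_val]
  have hle : Multiset.card σ.cycleType ≤ σ.cycleType.sum := by
    simpa using Multiset.card_nsmul_le_sum (s := σ.cycleType) (a := 1)
      fun k hk => (two_le_of_mem_cycleType hk).trans' one_le_two
  have hindex : permIndex σ = σ.cycleType.sum - Multiset.card σ.cycleType := by
    unfold permIndex; congr
  have hsum := σ.sum_cycleType_le
  omega

end OrbitCount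

def prodCongrHom : Perm α × Perm β →* Perm (α × β) where
  toFun p := p.1.prodCongr p.2
  map_one' := rfl
  map_mul' _ _ := rfl

theorem prodCongr_zpow (x : Perm α) (y : Perm β) (i : ℤ) :
    (x.prodCongr y : Perm (α × β)) ^ i = (x ^ i).prodCongr (y ^ i) :=
  (map_zpow prodCongrHom (x, y) i).symm

theorem sameCycle_prodCongr_one_iff (x : Perm α) {p q : α × β} :
    SameCycle (x.prodCongr 1) p q ↔ x.SameCycle p.1 q.1 ∧ p.2 = q.2 := by
  simp [SameCycle, prodCongr_zpow, Prod.ext_iff, exists_and_right]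

theorem sameCycle_setoid_prodCongr_one (x : Perm α) :
    SameCycle.setoid (x.prodCongr (1 : Perm β)) = (SameCycle.setoid x).prod ⊥ := by
  ext
  exact sameCycle_prodCongr_one_iff x

theorem card_quotient_sameCycle_prodCongr_one (x : Perm α) :
    Nat.card (Quotient (SameCycle.setoid (x.prodCongr (1 : Perm β)))) =
      Nat.card (Quotient (SameCycle.setoid x)) * Nat.card β := by
  rw [sameCycle_setoid_prodCongr_one, ← Nat.card_congr (Setoid.prodQuotientEquiv _ _),
    Nat.card_prod, Nat.card_congr Setoid.quotientBotEquiv]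

/-- Every orbit of `(x, y)` meets `{a} × β` for the chosen representative `a` of some orbit
of `x`. -/
theorem card_quotient_sameCycle_prodCongr_le [Finite α] [Finite β] (x : Perm α) (y : Perm β) :
    Nat.card (Quotient (SameCycle.setoid (x.prodCongr y))) ≤
      Nat.card (Quotient (SameCycle.setoid x)) * Nat.card β := by
  rw [← Nat.card_prod]
  refine Nat.card_le_card_of_surjective (fun ob => ⟦(ob.1.out, ob.2)⟧) ?_
  rintro ⟨⟨a, b⟩⟩
  obtain ⟨i, hi⟩ := Quotient.exact (Quotient.out_eq (Quotient.mk (SameCycle.setoid x) a))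
  refine ⟨(Quotient.mk _ a, (y ^ (-i)) b), Quotient.sound ⟨i, ?_⟩⟩
  simp [prodCongr_zpow, hi]

section Index

variable [Fintype α] [Fintype β]

theorem card_mul_permIndex_le_permIndex_prodCongr (x : Perm α) (y : Perm β) :
    Nat.card β * permIndex x ≤ permIndex (x.prodCongr y : Perm (α × β)) := by
  have hx := permIndex_add_card_quotient_sameCycle x
  have hxy := permIndex_add_card_quotient_sameCycle (x.prodCongr y : Perm (α × β))
  have hle := card_quotient_sameCycle_prodCongr_le x y
  rw [Nat.card_prod, ← hx] at hxy
  nlinarith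

theorem permIndex_prodCongr_one (x : Perm α) :
    permIndex (x.prodCongr (1 : Perm β) : Perm (α × β)) = Nat.card β * permIndex x := by
  have hx := permIndex_add_card_quotient_sameCycle x
  have hx1 := permIndex_add_card_quotient_sameCycle (x.prodCongr (1 : Perm β) : Perm (α × β))
  rw [card_quotient_sameCycle_prodCongr_one, Nat.card_prod, ← hx] at hx1
  nlinarith

end Index

end Equiv.Perm

/-- For `x ∈ S_m` and `y ∈ S_n`, the index of the product permutation `(x, y)` of the `m·n`
points satisfies `ind (x, y) ≥ n · ind x`, with equality when `y = 1`; in particular the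
minimal index of an element of `S_m × S_n` (product action on `m·n` points) projecting to a
given `x ∈ S_m` is attained at `(x, 1)` and equals `n · ind x`. -/
theorem product_perm_index (m n : ℕ) (x : Equiv.Perm (Fin m)) :
    (∀ y : Equiv.Perm (Fin n), n * permIndex x ≤ permIndex (Equiv.prodCongr x y)) ∧
    permIndex (Equiv.prodCongr x (1 : Equiv.Perm (Fin n))) = n * permIndex x := by
  refine ⟨fun y => ?_, ?_⟩
  · simpa only [Nat.card_fin] using Equiv.Perm.card_mul_permIndex_le_permIndex_prodCongr x y
  · simpa only [Nat.card_fin] using Equiv.Perm.permIndex_prodCongr_one (β := Fin n) x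
end

section
/- The generator index of the dihedral group D_n in its natural degree-n action equals (n−1)/2 if n is odd and n/2 if n is even; moreover the set of reflections is a generating set attaining this bound. -/
noncomputable def genIndex {α : Type*} [Fintype α] (G : Subgroup (Equiv.Perm α)) : ℕ :=
  sInf {k | ∃ S : Set (Equiv.Perm α), Subgroup.closure S = G ∧ ∀ σ ∈ S, permIndex σ ≤ k}

/-- The ngonRotation `x ↦ 1 + x` of the vertices of a regular `n`-gon. -/
def ngonRotation (n : ℕ) : Equiv.Perm (ZMod n) := Equiv.addLeft 1

/-- The ngonReflection `x ↦ a - x` of the vertices of a regular `n`-gon. -/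
def ngonReflection (n : ℕ) (a : ZMod n) : Equiv.Perm (ZMod n) :=
  Function.Involutive.toPerm (fun x => a - x) (fun x => by ring)

/-- The dihedral group of order `2n` in its natural degree-`n` action on the vertices of a
regular `n`-gon, generated by a ngonRotation and a ngonReflection. -/
def dihedralSubgroup (n : ℕ) : Subgroup (Equiv.Perm (ZMod n)) :=
  Subgroup.closure {ngonRotation n, ngonReflection n 0}

/-!
A reflection is an involution, so its index is half the number of vertices it moves, at most
`n / 2`, which also equals `(n - 1) / 2` for odd `n`; and products of two reflections give all
rotations. Conversely, a permutation of index `< n / 2` has a fixed point, and a symmetry of the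
`n`-gon fixing a vertex `x` is the identity or the reflection `y ↦ 2x - y`. For even `n` all of
these preserve the parity of vertices, so they cannot generate the rotation. For odd `n`, index
`< (n - 1) / 2` forces two fixed points, which only the identity has since `2` is invertible.
-/

open Equiv Finset

section PermIndex

variable {α : Type*} [Fintype α]

theorem permIndex_eq_card_support_sub [DecidableEq α] (σ : Perm α) :
    permIndex σ = #σ.support - σ.cycleType.card := by
  rw [← σ.sum_cycleType, permIndex]
  congr!

theorem two_mul_card_cycleType_le_card_support [DecidableEq α] (σ : Perm α) :
    2 * σ.cycleType.card ≤ #σ.support := by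
  rw [← σ.sum_cycleType, mul_comm, ← smul_eq_mul]
  exact Multiset.card_nsmul_le_sum fun _ hc ↦ Perm.two_le_of_mem_cycleType hc

theorem card_support_div_two_le_permIndex [DecidableEq α] (σ : Perm α) :
    #σ.support / 2 ≤ permIndex σ := by
  have := two_mul_card_cycleType_le_card_support σ
  rw [permIndex_eq_card_support_sub]
  omega

/-- Every cycle of an involution is a transposition. -/
theorem permIndex_eq_card_support_div_two [DecidableEq α] {σ : Perm α} (hσ : σ ^ 2 = 1) :
    permIndex σ = #σ.support / 2 := by
  have hcycles : ∀ c ∈ σ.cycleType, c ≤ 2 := fun c hc ↦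
    Nat.le_of_dvd two_pos ((Perm.dvd_of_mem_cycleType hc).trans (orderOf_dvd_of_pow_eq_one hσ))
  have hsum : #σ.support ≤ σ.cycleType.card * 2 := by
    rw [← σ.sum_cycleType, ← smul_eq_mul]
    exact Multiset.sum_le_card_nsmul _ _ hcycles
  have := two_mul_card_cycleType_le_card_support σ
  rw [permIndex_eq_card_support_sub]
  omega

theorem permIndex_le_card (σ : Perm α) : permIndex σ ≤ Fintype.card α := by
  classical
  rw [permIndex_eq_card_support_sub]
  exact (Nat.sub_le _ _).trans (card_le_univ _)

theorem permIndex_le_card_div_two {σ : Perm α} (hσ : σ ^ 2 = 1) :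
    permIndex σ ≤ Fintype.card α / 2 := by
  classical
  rw [permIndex_eq_card_support_div_two hσ]
  exact Nat.div_le_div_right (card_le_univ _)

theorem exists_isFixedPt_of_permIndex_lt {σ : Perm α}
    (hσ : permIndex σ < Fintype.card α / 2) : ∃ x, σ x = x := by
  classical
  by_contra! h
  have hsupp : σ.support = univ := eq_univ_of_forall fun x ↦ Perm.mem_support.2 (h x)
  have := card_support_div_two_le_permIndex σ
  rw [hsupp, card_univ] at this
  omega

theorem exists_ne_isFixedPt_of_permIndex_lt {σ : Perm α}
    (hσ : permIndex σ < (Fintype.card α - 1) / 2) : ∃ x y, x ≠ y ∧ σ x = x ∧ σ y = y := by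
  classical
  obtain ⟨x, hx⟩ := exists_isFixedPt_of_permIndex_lt (hσ.trans_le (Nat.div_le_div_right (by omega)))
  by_contra! h
  have hsupp : univ.erase x ⊆ σ.support := fun y hy ↦
    Perm.mem_support.2 (h x y (ne_of_mem_erase hy).symm hx)
  have hcard : Fintype.card α - 1 ≤ #σ.support := by
    simpa using card_le_card hsupp
  have := card_support_div_two_le_permIndex σ
  omega

theorem genIndex_le_of_closure_eq {G : Subgroup (Perm α)} {S : Set (Perm α)} {k : ℕ}
    (hS : Subgroup.closure S = G) (hk : ∀ σ ∈ S, permIndex σ ≤ k) : genIndex G ≤ k :=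
  Nat.sInf_le ⟨S, hS, hk⟩

theorem le_genIndex_of_not_le {G H : Subgroup (Perm α)} {k : ℕ} (hGH : ¬G ≤ H)
    (hk : ∀ σ ∈ G, permIndex σ < k → σ ∈ H) : k ≤ genIndex G := by
  refine le_csInf ⟨Fintype.card α, G, Subgroup.closure_eq G, fun σ _ ↦ permIndex_le_card σ⟩ ?_
  rintro m ⟨S, rfl, hm⟩
  by_contra! hmk
  exact hGH <| (Subgroup.closure_le H).2 fun σ hσ ↦
    hk σ (Subgroup.subset_closure hσ) ((hm σ hσ).trans_lt hmk)

end PermIndex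

def displacementSubgroup {A : Type*} [AddGroup A] (K : AddSubgroup A) : Subgroup (Perm A) where
  carrier := {σ | ∀ x, σ x - x ∈ K}
  one_mem' := by simp
  mul_mem' {σ τ} hσ hτ x := by
    simpa only [Perm.mul_apply, sub_add_sub_cancel] using add_mem (hσ (τ x)) (hτ x)
  inv_mem' {σ} hσ x := by
    simpa using neg_mem (hσ (σ⁻¹ x))

section Dihedral

variable {n : ℕ}

@[simp]
theorem ngonReflection_apply (a x : ZMod n) : ngonReflection n a x = a - x := rfl

theorem ngonReflection_mul_ngonReflection (a b : ZMod n) :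
    ngonReflection n a * ngonReflection n b = Equiv.addLeft (a - b) := by
  ext x; simp only [Perm.mul_apply, ngonReflection_apply, coe_addLeft]; ring

theorem addLeft_mul_ngonReflection (j a : ZMod n) :
    Equiv.addLeft j * ngonReflection n a = ngonReflection n (j + a) := by
  ext x; simp only [Perm.mul_apply, ngonReflection_apply, coe_addLeft]; ring

theorem ngonReflection_mul_addLeft (a j : ZMod n) :
    ngonReflection n a * Equiv.addLeft j = ngonReflection n (a - j) := by
  ext x; simp only [Perm.mul_apply, ngonReflection_apply, coe_addLeft]; ring

theorem ngonReflection_sq (a : ZMod n) : ngonReflection n a ^ 2 = 1 := by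
  rw [sq, ngonReflection_mul_ngonReflection, sub_self, Equiv.addLeft_zero]

theorem addLeft_mem_dihedralSubgroup (j : ZMod n) : Equiv.addLeft j ∈ dihedralSubgroup n := by
  have hrot : ngonRotation n ∈ dihedralSubgroup n := Subgroup.subset_closure (by simp)
  have := zpow_mem hrot (ZMod.cast j : ℤ)
  rwa [ngonRotation, Equiv.zsmul_addLeft, zsmul_one, ZMod.intCast_zmod_cast] at this

theorem ngonReflection_mem_dihedralSubgroup (a : ZMod n) :
    ngonReflection n a ∈ dihedralSubgroup n := by
  rw [← add_zero a, ← addLeft_mul_ngonReflection]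
  exact mul_mem (addLeft_mem_dihedralSubgroup a) (Subgroup.subset_closure (by simp))

theorem mem_dihedralSubgroup_iff {σ : Perm (ZMod n)} :
    σ ∈ dihedralSubgroup n ↔ (∃ j, σ = Equiv.addLeft j) ∨ ∃ a, σ = ngonReflection n a := by
  refine ⟨fun hσ ↦ ?_, ?_⟩
  · induction hσ using Subgroup.closure_induction with
    | mem σ hσ =>
      rcases hσ with rfl | rfl
      exacts [Or.inl ⟨1, rfl⟩, Or.inr ⟨0, rfl⟩]
    | one => exact Or.inl ⟨0, Equiv.addLeft_zero.symm⟩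
    | mul σ τ _ _ hσ hτ =>
      rcases hσ with ⟨j, rfl⟩ | ⟨a, rfl⟩ <;> rcases hτ with ⟨k, rfl⟩ | ⟨b, rfl⟩
      · exact Or.inl ⟨j + k, (Equiv.addLeft_add j k).symm⟩
      · exact Or.inr ⟨j + b, addLeft_mul_ngonReflection j b⟩
      · exact Or.inr ⟨a - k, ngonReflection_mul_addLeft a k⟩
      · exact Or.inl ⟨a - b, ngonReflection_mul_ngonReflection a b⟩
    | inv σ _ hσ =>
      rcases hσ with ⟨j, rfl⟩ | ⟨a, rfl⟩
      · exact Or.inl ⟨-j, Equiv.neg_addLeft j⟩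
      · exact Or.inr ⟨a, inv_eq_of_mul_eq_one_right (by rw [← sq, ngonReflection_sq])⟩
  · rintro (⟨j, rfl⟩ | ⟨a, rfl⟩)
    exacts [addLeft_mem_dihedralSubgroup j, ngonReflection_mem_dihedralSubgroup a]

theorem closure_ngonReflections :
    Subgroup.closure {σ : Perm (ZMod n) | ∃ a : ZMod n, σ = ngonReflection n a} =
      dihedralSubgroup n := by
  refine le_antisymm ((Subgroup.closure_le _).2 ?_) ((Subgroup.closure_le _).2 ?_)
  · rintro _ ⟨a, rfl⟩
    exact ngonReflection_mem_dihedralSubgroup a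
  · have hrot : ngonRotation n = ngonReflection n 1 * ngonReflection n 0 := by
      rw [ngonReflection_mul_ngonReflection, sub_zero, ngonRotation]
    rintro _ (rfl | rfl)
    · rw [hrot]
      exact mul_mem (Subgroup.subset_closure ⟨1, rfl⟩) (Subgroup.subset_closure ⟨0, rfl⟩)
    · exact Subgroup.subset_closure ⟨0, rfl⟩

theorem eq_one_or_eq_ngonReflection_of_isFixedPt {σ : Perm (ZMod n)}
    (hσ : σ ∈ dihedralSubgroup n) {x : ZMod n} (hx : σ x = x) :
    σ = 1 ∨ σ = ngonReflection n (2 * x) := by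
  rcases mem_dihedralSubgroup_iff.1 hσ with ⟨j, rfl⟩ | ⟨a, rfl⟩
  · left
    rw [show j = 0 by simpa using hx, Equiv.addLeft_zero]
  · right
    rw [show a = 2 * x by rw [ngonReflection_apply] at hx; linear_combination hx]

variable [NeZero n]

theorem permIndex_ngonReflection_le (a : ZMod n) : permIndex (ngonReflection n a) ≤ n / 2 :=
  (permIndex_le_card_div_two (ngonReflection_sq a)).trans_eq (by rw [ZMod.card])

theorem le_genIndex_dihedralSubgroup_of_even (hn : Even n) :
    n / 2 ≤ genIndex (dihedralSubgroup n) := by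
  set parity := ZMod.castHom hn.two_dvd (ZMod 2)
  refine le_genIndex_of_not_le (H := displacementSubgroup parity.toAddMonoidHom.ker) ?_ ?_
  · intro hle
    have := hle (addLeft_mem_dihedralSubgroup 1) 0
    simp at this
  · intro σ hσ hlt
    obtain ⟨x, hx⟩ := exists_isFixedPt_of_permIndex_lt (σ := σ) (by rwa [ZMod.card])
    rcases eq_one_or_eq_ngonReflection_of_isFixedPt hσ hx with rfl | rfl
    · exact one_mem _
    · intro y
      have h2 : parity 2 = 0 := by rw [map_ofNat]; decide
      simp only [AddMonoidHom.mem_ker, RingHom.toAddMonoidHom_eq_coe,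
        AddMonoidHom.coe_coe, ngonReflection_apply]
      rw [show 2 * x - y - y = 2 * (x - y) by ring, map_mul, h2, zero_mul]

theorem le_genIndex_dihedralSubgroup_of_odd (hn : Odd n) :
    n / 2 ≤ genIndex (dihedralSubgroup n) := by
  obtain rfl | hn1 := eq_or_ne n 1
  · exact Nat.zero_le _
  refine le_genIndex_of_not_le (H := ⊥) ?_ ?_
  · intro hle
    have := congr($(Subgroup.mem_bot.1 (hle (addLeft_mem_dihedralSubgroup 1))) (0 : ZMod n))
    simp [ZMod.one_eq_zero_iff, hn1] at this
  · intro σ hσ hlt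
    obtain ⟨x, y, hxy, hx, hy⟩ := exists_ne_isFixedPt_of_permIndex_lt (σ := σ) (by
      rw [ZMod.card]; obtain ⟨m, rfl⟩ := hn; omega)
    rcases eq_one_or_eq_ngonReflection_of_isFixedPt hσ hx with rfl | rfl
    · exact one_mem _
    · have h2 : IsUnit (2 : ZMod n) := by
        exact_mod_cast (ZMod.isUnit_iff_coprime 2 n).2 (Nat.coprime_two_left.2 hn)
      refine absurd (sub_eq_zero.1 (h2.mul_left_cancel ?_)) hxy
      rw [ngonReflection_apply] at hy
      linear_combination hy

end Dihedral

theorem genIndex_dihedral_general (n : ℕ) [NeZero n] :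
    genIndex (dihedralSubgroup n) = (if Even n then n / 2 else (n - 1) / 2) ∧
    Subgroup.closure {σ : Equiv.Perm (ZMod n) | ∃ a : ZMod n, σ = ngonReflection n a} =
      dihedralSubgroup n ∧
    ∀ a : ZMod n, permIndex (ngonReflection n a) ≤ genIndex (dihedralSubgroup n) := by
  have hgen : genIndex (dihedralSubgroup n) = n / 2 := by
    refine le_antisymm (genIndex_le_of_closure_eq closure_ngonReflections ?_) ?_
    · rintro _ ⟨a, rfl⟩
      exact permIndex_ngonReflection_le a
    · rcases Nat.even_or_odd n with hn | hn
      exacts [le_genIndex_dihedralSubgroup_of_even hn, le_genIndex_dihedralSubgroup_of_odd hn]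
  have hhalf : (if Even n then n / 2 else (n - 1) / 2) = n / 2 := by
    split_ifs with hn
    · rfl
    · obtain ⟨m, rfl⟩ := Nat.not_even_iff_odd.1 hn
      omega
  exact ⟨hgen.trans hhalf.symm, closure_ngonReflections,
    fun a ↦ hgen ▸ permIndex_ngonReflection_le a⟩

/-- The generator index of `D_n` in its natural degree-`n` action is `(n-1)/2` for `n` odd and
`n/2` for `n` even; moreover the set of reflections is a generating set attaining this bound. -/
theorem genIndex_dihedral (n : ℕ) [NeZero n] (hn : 3 ≤ n) :
    genIndex (dihedralSubgroup n) = (if Even n then n / 2 else (n - 1) / 2) ∧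
    Subgroup.closure {σ : Equiv.Perm (ZMod n) | ∃ a : ZMod n, σ = ngonReflection n a} =
      dihedralSubgroup n ∧
    ∀ a : ZMod n, permIndex (ngonReflection n a) ≤ genIndex (dihedralSubgroup n) :=
  genIndex_dihedral_general n
end

section
/- Let f ∈ ℤ[X] be a nonzero polynomial and N the largest positive integer dividing f(m) for all m ∈ ℤ. Then there exist integers m_1 ≥ 1 and m_2 such that N divides every coefficient of f(m_1·X + m_2) ∈ ℤ[X] and no prime divides all values of the polynomial f(m_1·X + m_2)/N at integer arguments. -/
open Polynomial Function

/-!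
By maximality of `N`, for every prime `q` some value `f(m_q)` is not divisible by `q N`; since
`N` divides all values, this says `q ^ (v_q(N) + 1) ∤ f(m_q)`, a condition depending only on
`m_q` modulo `q ^ (v_q(N) + 1)`. Take `m₁ = N` and, by the Chinese remainder theorem, `m₂`
congruent to `m_q` modulo `q ^ (v_q(N) + 1)` for every `q ∣ N`. Then `x = 0` works for `q ∣ N`,
while for `q ∤ N` the map `x ↦ N x + m₂` is onto modulo `q`. The coefficients of
`f(N X + m₂)` are divisible by `N` because `f(N X + m₂) ≡ f(m₂) ≡ 0` modulo `N`.
-/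

theorem Int.exists_forall_dvd_sub {ι : Type*} [Finite ι] {s : ι → ℤ}
    (hs : Pairwise (IsCoprime on s)) (x : ι → ℤ) : ∃ r : ℤ, ∀ i, s i ∣ r - x i := by
  have hI : Pairwise (IsCoprime on fun i ↦ Ideal.span {s i}) := fun _ _ hij ↦
    (Ideal.isCoprime_span_singleton_iff _ _).mpr (hs hij)
  simpa only [Ideal.mem_span_singleton] using Ideal.exists_forall_sub_mem_ideal hI x

theorem Nat.pairwise_isCoprime_primeFactors_pow (N : ℕ) (e : ℕ → ℕ) :
    Pairwise (IsCoprime on fun q : N.primeFactors ↦ (q : ℤ) ^ e q) :=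
  fun p q hpq ↦ (Nat.isCoprime_iff_coprime.mpr <| (Nat.coprime_primes
    (Nat.prime_of_mem_primeFactors p.2) (Nat.prime_of_mem_primeFactors q.2)).mpr
    (Subtype.coe_ne_coe.mpr hpq)).pow

theorem IsCoprime.exists_dvd_mul_add_sub {a q : ℤ} (h : IsCoprime a q) (b m : ℤ) :
    ∃ x, q ∣ a * x + b - m := by
  obtain ⟨u, v, huv⟩ := h
  exact ⟨u * (m - b), -(v * (m - b)), by linear_combination (m - b) * huv⟩

theorem Int.mul_dvd_iff_pow_factorization_succ_dvd {q N : ℕ} (hq : q.Prime) (hN : N ≠ 0)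
    {a : ℤ} (ha : (N : ℤ) ∣ a) :
    (q * N : ℤ) ∣ a ↔ (q : ℤ) ^ (N.factorization q + 1) ∣ a := by
  have hN' : (N : ℤ) = q ^ N.factorization q * (ordCompl[q] N : ℕ) := by
    exact_mod_cast (Nat.ordProj_mul_ordCompl_eq_self N q).symm
  have hqN : (q * N : ℤ) = q ^ (N.factorization q + 1) * (ordCompl[q] N : ℕ) := by
    rw [hN', pow_succ]; ring
  rw [hqN]
  refine ⟨dvd_of_mul_right_dvd, fun h ↦ ?_⟩
  have hcop : IsCoprime ((q : ℤ) ^ (N.factorization q + 1)) (ordCompl[q] N : ℕ) :=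
    (Nat.isCoprime_iff_coprime.mpr (Nat.coprime_ordCompl hq hN)).pow_left
  exact hcop.mul_dvd h ((dvd_mul_left _ _).trans (hN' ▸ ha))

theorem Polynomial.dvd_coeff_comp_C_mul_X_add_C {f : ℤ[X]} {n b : ℤ} (h : n ∣ f.eval b)
    (i : ℕ) : n ∣ (f.comp (C n * X + C b)).coeff i := by
  have hsub : C n ∣ f.comp (C n * X + C b) - f.comp (C b) := by
    -- evaluating `f.map C` at a polynomial `g` is `f.comp g`
    have := sub_dvd_eval_sub (C n * X + C b) (C b) (f.map C)
    rw [add_sub_cancel_right, eval_map, eval_map] at this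
    exact (dvd_mul_right _ _).trans this
  have hconst : C n ∣ f.comp (C b) := by
    rw [comp_C]; exact _root_.map_dvd C h
  exact (C_dvd_iff_dvd_coeff _ _).mp ((dvd_sub_left hconst).mp hsub) i

theorem exists_not_mul_dvd_eval_of_maximal {f : ℤ[X]} {N : ℕ} (hN : 0 < N)
    (hmax : ∀ M : ℕ, 0 < M → (∀ m : ℤ, (M : ℤ) ∣ f.eval m) → M ≤ N) {q : ℕ}
    (hq : q.Prime) : ∃ m : ℤ, ¬ (q * N : ℤ) ∣ f.eval m := by
  by_contra! h
  have := hmax (q * N) (Nat.mul_pos hq.pos hN) (by exact_mod_cast h)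
  exact ((Nat.lt_mul_iff_one_lt_left hN).mpr hq.one_lt).not_ge this

theorem fixed_divisor_normalization_general (f : ℤ[X]) (N : ℕ) (hNpos : 0 < N)
    (hdvd : ∀ m : ℤ, (N : ℤ) ∣ f.eval m)
    (hmax : ∀ M : ℕ, 0 < M → (∀ m : ℤ, (M : ℤ) ∣ f.eval m) → M ≤ N) :
    ∃ (m₁ m₂ : ℤ), 1 ≤ m₁ ∧
      (∀ i : ℕ, (N : ℤ) ∣ (f.comp (C m₁ * X + C m₂)).coeff i) ∧
      ∀ q : ℕ, q.Prime → ∃ x : ℤ, ¬ ((q : ℤ) * N ∣ f.eval (m₁ * x + m₂)) := by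
  have hN := hNpos.ne'
  have hwit (q : ℕ) (hq : q.Prime) :
      ∃ m : ℤ, ¬ (q : ℤ) ^ (N.factorization q + 1) ∣ f.eval m := by
    obtain ⟨m, hm⟩ := exists_not_mul_dvd_eval_of_maximal hNpos hmax hq
    exact ⟨m, by rwa [← Int.mul_dvd_iff_pow_factorization_succ_dvd hq hN (hdvd m)]⟩
  choose! m hm using hwit
  obtain ⟨k, hk⟩ := Int.exists_forall_dvd_sub
    (Nat.pairwise_isCoprime_primeFactors_pow N (fun q ↦ N.factorization q + 1)) (fun q ↦ m q)
  refine ⟨N, k, mod_cast hNpos, dvd_coeff_comp_C_mul_X_add_C (hdvd k), fun q hq ↦ ?_⟩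
  obtain ⟨x, hx⟩ : ∃ x : ℤ, (q : ℤ) ^ (N.factorization q + 1) ∣ N * x + k - m q := by
    by_cases hqN : q ∣ N
    · exact ⟨0, by simpa using hk ⟨q, Nat.mem_primeFactors.mpr ⟨hq, hqN, hN⟩⟩⟩
    · rw [Nat.factorization_eq_zero_of_not_dvd hqN, zero_add, pow_one]
      have hcopN : IsCoprime (N : ℤ) q :=
        Nat.isCoprime_iff_coprime.mpr (hq.coprime_iff_not_dvd.mpr hqN).symm
      exact hcopN.exists_dvd_mul_add_sub k (m q)
  refine ⟨x, ?_⟩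
  rw [Int.mul_dvd_iff_pow_factorization_succ_dvd hq hN (hdvd _),
    dvd_iff_dvd_of_dvd_sub (hx.trans (sub_dvd_eval_sub _ _ f))]
  exact hm q hq

/-- Let `f ∈ ℤ[X]` be nonzero and `N` the largest positive integer dividing `f(m)` for all
`m ∈ ℤ` (the fixed divisor of `f`). Then there exist integers `m₁ ≥ 1` and `m₂` such that `N`
divides every coefficient of `f(m₁·X + m₂)`, and no prime `q` divides all the integer values
of the polynomial `f(m₁·X + m₂)/N` (equivalently, for each prime `q` there is an integer `x`
with `q·N ∤ f(m₁·x + m₂)`). -/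
theorem fixed_divisor_normalization (f : ℤ[X]) (hf : f ≠ 0) (N : ℕ) (hNpos : 0 < N)
    (hdvd : ∀ m : ℤ, (N : ℤ) ∣ f.eval m)
    (hmax : ∀ M : ℕ, 0 < M → (∀ m : ℤ, (M : ℤ) ∣ f.eval m) → M ≤ N) :
    ∃ (m₁ m₂ : ℤ), 1 ≤ m₁ ∧
      (∀ i : ℕ, (N : ℤ) ∣ (f.comp (C m₁ * X + C m₂)).coeff i) ∧
      ∀ q : ℕ, q.Prime → ∃ x : ℤ, ¬ ((q : ℤ) * N ∣ f.eval (m₁ * x + m₂)) :=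
  fixed_divisor_normalization_general f N hNpos hdvd hmax
end
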